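/- arXiv:1906.04449 — 9 statements merged into one kernel-verified Lean document; each statement's English description precedes it below -/
import Mathlib

section
/- For every real number w ≥ 1 and integer k = 2^ℓ with ℓ ≥ 1, setting w₂ = k^⌊log_k w⌋ and i = ⌊log₂ w⌋, we have w/2 ≤ w₂ · 2^(i mod ℓ) ≤ w. -/
/-! Both floors are integer logarithms: with `i = ⌊log₂ w⌋` one has `⌊log_{2^ℓ} w⌋ = ⌊i / ℓ⌋`, so
`w₂ · 2^(i mod ℓ) = 2^(ℓ ⌊i/ℓ⌋ + i mod ℓ) = 2^i`, while `2^i ≤ w < 2^(i+1)`. -/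

section IntLog

variable {R : Type*} [Semifield R] [LinearOrder R] [IsStrictOrderedRing R] [FloorSemiring R]

theorem Int.log_pow_base {b n : ℕ} (hb : 1 < b) (hn : n ≠ 0) {r : R} (hr : 0 < r) :
    Int.log (b ^ n) r = Int.log b r / n := by
  have hbn : 1 < b ^ n := Nat.one_lt_pow hn hb
  refine eq_of_forall_le_iff fun m => ?_
  rw [← Int.zpow_le_iff_le_log hbn hr, Int.le_ediv_iff_mul_le (by omega),
    ← Int.zpow_le_iff_le_log hb hr, Nat.cast_pow, ← zpow_natCast, ← zpow_mul, mul_comm]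

theorem Int.div_two_le_zpow_log_two (r : R) : r / 2 ≤ 2 ^ Int.log 2 r := by
  have h := Int.lt_zpow_succ_log_self (R := R) one_lt_two r
  rw [Nat.cast_ofNat, zpow_add_one₀ two_ne_zero] at h
  rw [div_le_iff₀ two_pos]
  exact h.le

end IntLog

theorem zpow_ediv_mul_zpow_emod {G : Type*} [GroupWithZero G] {a : G} (ha : a ≠ 0) (i n : ℤ) :
    (a ^ n) ^ (i / n) * a ^ (i % n) = a ^ i := by
  rw [← zpow_mul, ← zpow_add₀ ha, Int.mul_ediv_add_emod]

/-- For every real `w ≥ 1` and `k = 2^ℓ` with `ℓ ≥ 1`, setting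
`w₂ = k^⌊log_k w⌋` and `i = ⌊log₂ w⌋`, we have `w/2 ≤ w₂ · 2^(i mod ℓ) ≤ w`. -/
theorem stmt_0 (ℓ : ℤ) (hℓ : 1 ≤ ℓ) (k : ℤ) (hk : k = 2 ^ ℓ.toNat) (w : ℝ) (hw : 1 ≤ w) :
    w / 2 ≤ (k : ℝ) ^ ⌊Real.logb k w⌋ * (2 : ℝ) ^ (⌊Real.logb 2 w⌋ % ℓ) ∧
      (k : ℝ) ^ ⌊Real.logb k w⌋ * (2 : ℝ) ^ (⌊Real.logb 2 w⌋ % ℓ) ≤ w := by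
  obtain ⟨n, rfl⟩ : ∃ n : ℕ, ℓ = n := ⟨ℓ.toNat, by omega⟩
  have hw0 : 0 < w := by linarith
  have hk' : (k : ℝ) = ((2 ^ n : ℕ) : ℝ) := by simp [hk]
  have hfloor_k : ⌊Real.logb k w⌋ = Int.log 2 w / n := by
    rw [hk', Real.floor_logb_natCast hw0.le, Int.log_pow_base one_lt_two (by omega) hw0]
  have hfloor_2 : ⌊Real.logb 2 w⌋ = Int.log 2 w := by
    exact_mod_cast Real.floor_logb_natCast (b := 2) hw0.le
  have hprod : (k : ℝ) ^ ⌊Real.logb k w⌋ * (2 : ℝ) ^ (⌊Real.logb 2 w⌋ % (n : ℤ)) =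
      2 ^ Int.log 2 w := by
    rw [hfloor_k, hfloor_2, hk', Nat.cast_pow, Nat.cast_ofNat, ← zpow_natCast,
      zpow_ediv_mul_zpow_emod two_ne_zero]
  rw [hprod]
  exact ⟨Int.div_two_le_zpow_log_two w, by exact_mod_cast Int.zpow_log_le_self one_lt_two hw0⟩
end

section
/- Every k-extendible system is a k-set system: for every subset S of the ground set, the ratio between the sizes of any two inclusion-wise maximal independent subsets of S is at most k. -/
/-!
Let `B₁, B₂` be bases of `S`. Starting from `T = B₁`, insert the elements of `B₂ \ B₁` one at a
time while keeping `B₁ ∩ B₂` and everything inserted so far: `k`-extendibility allows each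
insertion at the price of deleting at most `k` elements of `B₁ \ B₂`. The final independent set
contains `B₂` and lies in `S`, so by maximality it is `B₂`; thus all of `B₁ \ B₂` was deleted,
and `|B₁ \ B₂| ≤ k |B₂ \ B₁|`.
-/

open Finset

section

variable {α : Type*} [DecidableEq α]

def IsExtendible (N : Finset α) (I : Finset α → Prop) (k : ℕ) : Prop :=
  ∀ S T : Finset α, S ⊆ T → T ⊆ N → I S → I T → ∀ u ∈ N, u ∉ T →
    I (insert u S) → ∃ Y ⊆ T \ S, Y.card ≤ k ∧ I (insert u (T \ Y))

namespace IsExtendible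

variable {N : Finset α} {I : Finset α → Prop} {k : ℕ}

theorem exists_insert_subset (hI : IsExtendible N I k) {C T : Finset α} {u : α}
    (hCT : C ⊆ T) (hTN : T ⊆ N) (hC : I C) (hT : I T) (hu : u ∈ N) (huT : u ∉ T)
    (hCu : I (insert u C)) :
    ∃ T', I T' ∧ insert u C ⊆ T' ∧ T' ⊆ insert u T ∧ (T \ T').card ≤ k := by
  obtain ⟨Y, hY, hYk, hIY⟩ := hI C T hCT hTN hC hT u hu huT hCu
  refine ⟨insert u (T \ Y), hIY, insert_subset_insert u ?_,
    insert_subset_insert u sdiff_subset, ?_⟩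
  · exact subset_sdiff.2 ⟨hCT, disjoint_of_subset_right hY disjoint_sdiff⟩
  · refine (card_le_card fun x hx => ?_).trans hYk
    simp only [mem_sdiff, mem_insert] at hx
    tauto

theorem exists_augment (hI : IsExtendible N I k)
    (hdown : ∀ S T : Finset α, T ⊆ N → I T → S ⊆ T → I S)
    {A C : Finset α} (hA : I A) (hAN : A ⊆ N) (hCA : C ⊆ A) (D : Finset α) (hDN : D ⊆ N)
    (hAD : Disjoint A D) (hCD : I (C ∪ D)) :
    ∃ T, I T ∧ C ∪ D ⊆ T ∧ T ⊆ A ∪ D ∧ (A \ T).card ≤ k * D.card := by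
  induction D using Finset.induction_on with
  | empty => exact ⟨A, hA, by simpa using hCA, subset_union_left, by simp⟩
  | @insert u D hu ih =>
    have huN : u ∈ N := hDN (mem_insert_self u D)
    have huA : u ∉ A := disjoint_right.1 hAD (mem_insert_self u D)
    have hCDN : C ∪ insert u D ⊆ N :=
      union_subset (hCA.trans hAN) hDN
    obtain ⟨T, hT, hCDT, hTAD, hcard⟩ :=
      ih ((subset_insert u D).trans hDN) (disjoint_of_subset_right (subset_insert u D) hAD)
        (hdown _ _ hCDN hCD (union_subset_union_right (subset_insert u D)))
    have huT : u ∉ T := fun h => (mem_union.1 (hTAD h)).elim huA hu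
    have hTN : T ⊆ N := hTAD.trans (union_subset hAN ((subset_insert u D).trans hDN))
    rw [union_insert] at hCD ⊢
    obtain ⟨T', hT', hCDT', hT'T, hcard'⟩ :=
      hI.exists_insert_subset hCDT hTN (hdown _ _ hTN hT hCDT) hT huN huT hCD
    refine ⟨T', hT', hCDT', ?_, ?_⟩
    · refine hT'T.trans (insert_subset_iff.2 ⟨?_, hTAD.trans ?_⟩)
      · simp
      · exact union_subset_union_right (subset_insert u D)
    · have hsplit : A \ T' ⊆ (A \ T) ∪ (T \ T') := fun x hx => by
        simp only [mem_sdiff, mem_union] at hx ⊢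
        tauto
      calc (A \ T').card ≤ (A \ T).card + (T \ T').card :=
            (card_le_card hsplit).trans (card_union_le _ _)
        _ ≤ k * D.card + k := add_le_add hcard hcard'
        _ = k * (insert u D).card := by rw [card_insert_of_notMem hu]; ring

end IsExtendible

theorem subset_of_maximal_of_subset {N S B T : Finset α} {I : Finset α → Prop}
    (hdown : ∀ S T : Finset α, T ⊆ N → I T → S ⊆ T → I S)
    (hmax : ∀ u ∈ S, u ∉ B → ¬ I (insert u B)) (hTN : T ⊆ N) (hTS : T ⊆ S) (hT : I T)
    (hBT : B ⊆ T) : T ⊆ B := fun x hx => by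
  by_contra hxB
  exact hmax x (hTS hx) hxB (hdown _ T hTN hT (insert_subset hx hBT))

theorem Finset.card_le_mul_card_of_card_sdiff_le {s t : Finset α} {k : ℕ} (hk : 1 ≤ k)
    (h : (s \ t).card ≤ k * (t \ s).card) : s.card ≤ k * t.card := by
  rw [← card_inter_add_card_sdiff s t, ← card_inter_add_card_sdiff t s, inter_comm t s,
    mul_add]
  exact add_le_add (Nat.le_mul_of_pos_left _ hk) h

end

theorem stmt_2_general {α : Type*} [DecidableEq α] (N : Finset α) (I : Finset α → Prop) (k : ℕ)
    (hk : 1 ≤ k)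
    (hdown : ∀ S T : Finset α, T ⊆ N → I T → S ⊆ T → I S)
    (hext : ∀ S T : Finset α, S ⊆ T → T ⊆ N → I S → I T → ∀ u ∈ N, u ∉ T →
      I (insert u S) → ∃ Y ⊆ T \ S, Y.card ≤ k ∧ I (insert u (T \ Y))) :
    ∀ S ⊆ N, ∀ B₁ B₂ : Finset α, B₁ ⊆ S → B₂ ⊆ S → I B₁ → I B₂ →
      (∀ u ∈ S, u ∉ B₁ → ¬ I (insert u B₁)) →
      (∀ u ∈ S, u ∉ B₂ → ¬ I (insert u B₂)) →
      B₁.card ≤ k * B₂.card := by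
  intro S hS B₁ B₂ hB₁S hB₂S hI₁ hI₂ _ hmax₂
  have hB₂ : B₁ ∩ B₂ ∪ B₂ \ B₁ = B₂ := by rw [union_comm, inter_comm, sdiff_union_inter]
  obtain ⟨T, hT, hB₂T, hTB, hcard⟩ :=
    IsExtendible.exists_augment (N := N) hext hdown hI₁ (hB₁S.trans hS) inter_subset_left
      (B₂ \ B₁) (sdiff_subset.trans (hB₂S.trans hS)) disjoint_sdiff (hB₂ ▸ hI₂)
  rw [hB₂] at hB₂T
  have hTS : T ⊆ S := hTB.trans (union_subset hB₁S (sdiff_subset.trans hB₂S))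
  have hTB₂ : T = B₂ :=
    (subset_of_maximal_of_subset hdown hmax₂ (hTS.trans hS) hTS hT hB₂T).antisymm hB₂T
  subst hTB₂
  exact card_le_mul_card_of_card_sdiff_le hk hcard

/-- Every k-extendible system is a k-set system: for every subset `S` of the
ground set, the sizes of any two inclusion-wise maximal independent subsets of `S` differ
by a factor of at most `k`. -/
theorem stmt_2 {α : Type*} [DecidableEq α] (N : Finset α) (I : Finset α → Prop) (k : ℕ)
    (hk : 1 ≤ k) (hempty : I ∅)
    (hdown : ∀ S T : Finset α, T ⊆ N → I T → S ⊆ T → I S)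
    (hext : ∀ S T : Finset α, S ⊆ T → T ⊆ N → I S → I T → ∀ u ∈ N, u ∉ T →
      I (insert u S) → ∃ Y ⊆ T \ S, Y.card ≤ k ∧ I (insert u (T \ Y))) :
    ∀ S ⊆ N, ∀ B₁ B₂ : Finset α, B₁ ⊆ S → B₂ ⊆ S → I B₁ → I B₂ →
      (∀ u ∈ S, u ∉ B₁ → ¬ I (insert u B₁)) →
      (∀ u ∈ S, u ∉ B₂ → ¬ I (insert u B₂)) →
      B₁.card ≤ k * B₂.card :=
  stmt_2_general N I k hk hdown hext
end

section
/- In a k-extendible system, if B is an inclusion-wise maximal independent set (a base) and A is any independent set, then k·|B \ A| ≥ |A \ B|. -/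
/-!
Induct on `|B \ A|`. If `B ⊆ A`, maximality of `B` forces `A = B`. Otherwise pick `b ∈ B \ A`
and apply `k`-extendibility to `B ∩ A ⊆ A` and `u = b`: at most `k` elements `Y ⊆ A \ B` can be
traded for `b`, giving an independent `A' = (A \ Y) + b` with `|B \ A'| = |B \ A| - 1` and
`|A \ B| ≤ |A' \ B| + k`.
-/

open Finset

section

variable {α : Type*}

def IsDownClosed (N : Finset α) (I : Finset α → Prop) : Prop :=
  ∀ S T : Finset α, T ⊆ N → I T → S ⊆ T → I S

variable [DecidableEq α]

def IsKExtendible (N : Finset α) (I : Finset α → Prop) (k : ℕ) : Prop :=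
  ∀ S T : Finset α, S ⊆ T → T ⊆ N → I S → I T → ∀ u ∈ N, u ∉ T →
    I (insert u S) → ∃ Y ⊆ T \ S, Y.card ≤ k ∧ I (insert u (T \ Y))

structure IsBase (N : Finset α) (I : Finset α → Prop) (B : Finset α) : Prop where
  subset : B ⊆ N
  indep : I B
  maximal : ∀ u ∈ N, u ∉ B → ¬ I (insert u B)

section

variable {N : Finset α} {I : Finset α → Prop} {k : ℕ} {A B Y : Finset α} {b : α}

theorem sdiff_insert_sdiff_of_disjoint (hYB : Disjoint Y B) :
    B \ insert b (A \ Y) = (B \ A).erase b := by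
  ext x
  have : x ∈ B → x ∉ Y := fun hx hxY => disjoint_left.1 hYB hxY hx
  simp only [mem_sdiff, mem_insert, mem_erase]
  tauto

theorem card_sdiff_le_card_insert_sdiff_sdiff_add_card :
    (A \ B).card ≤ (insert b (A \ Y) \ B).card + Y.card := by
  have hcover : A \ B ⊆ (insert b (A \ Y) \ B) ∪ Y := by
    intro x hx
    simp only [mem_union, mem_sdiff, mem_insert] at hx ⊢
    tauto
  exact (card_le_card hcover).trans (card_union_le _ _)

theorem IsBase.sdiff_eq_empty_of_subset (hdown : IsDownClosed N I) (hB : IsBase N I B)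
    (hAN : A ⊆ N) (hA : I A) (hBA : B ⊆ A) : A \ B = ∅ :=
  sdiff_eq_empty_iff_subset.2 fun x hx => by_contra fun hxB =>
    hB.maximal x (hAN hx) hxB (hdown _ A hAN hA (insert_subset hx hBA))

theorem IsKExtendible.exists_exchange (hext : IsKExtendible N I k) (hdown : IsDownClosed N I)
    (hBN : B ⊆ N) (hB : I B) (hAN : A ⊆ N) (hA : I A) (hbB : b ∈ B) (hbA : b ∉ A) :
    ∃ Y ⊆ A \ B, Y.card ≤ k ∧ I (insert b (A \ Y)) := by
  have hBA : I (B ∩ A) := hdown _ B hBN hB inter_subset_left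
  have hbBA : I (insert b (B ∩ A)) := hdown _ B hBN hB (insert_subset hbB inter_subset_left)
  simpa only [sdiff_inter_self_right] using
    hext (B ∩ A) A inter_subset_right hAN hBA hA b (hBN hbB) hbA hbBA

end

theorem IsBase.card_sdiff_le_mul_card_sdiff {N : Finset α} {I : Finset α → Prop} {k : ℕ}
    {A B : Finset α} (hdown : IsDownClosed N I) (hext : IsKExtendible N I k)
    (hB : IsBase N I B) (hAN : A ⊆ N) (hA : I A) :
    (A \ B).card ≤ k * (B \ A).card := by
  by_cases hBA : B ⊆ A
  · simp [hB.sdiff_eq_empty_of_subset hdown hAN hA hBA]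
  obtain ⟨b, hbB, hbA⟩ := not_subset.1 hBA
  obtain ⟨Y, hYAB, hYk, hA'⟩ := hext.exists_exchange hdown hB.subset hB.indep hAN hA hbB hbA
  have hA'N : insert b (A \ Y) ⊆ N := insert_subset (hB.subset hbB) (sdiff_subset.trans hAN)
  have hcard : (B \ insert b (A \ Y)).card + 1 = (B \ A).card := by
    rw [sdiff_insert_sdiff_of_disjoint (disjoint_of_subset_left hYAB sdiff_disjoint),
      card_erase_add_one (mem_sdiff.2 ⟨hbB, hbA⟩)]
  calc (A \ B).card ≤ (insert b (A \ Y) \ B).card + Y.card :=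
        card_sdiff_le_card_insert_sdiff_sdiff_add_card
    _ ≤ k * (B \ insert b (A \ Y)).card + k :=
        add_le_add (hB.card_sdiff_le_mul_card_sdiff hdown hext hA'N hA') hYk
    _ = k * (B \ A).card := by rw [← hcard, mul_add_one]
termination_by (B \ A).card
decreasing_by omega

end

theorem stmt_3_general {α : Type*} [DecidableEq α] (N : Finset α) (I : Finset α → Prop) (k : ℕ)
    (hdown : ∀ S T : Finset α, T ⊆ N → I T → S ⊆ T → I S)
    (hext : ∀ S T : Finset α, S ⊆ T → T ⊆ N → I S → I T → ∀ u ∈ N, u ∉ T →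
      I (insert u S) → ∃ Y ⊆ T \ S, Y.card ≤ k ∧ I (insert u (T \ Y)))
    (B : Finset α) (hBN : B ⊆ N) (hB : I B)
    (hBmax : ∀ u ∈ N, u ∉ B → ¬ I (insert u B))
    (A : Finset α) (hAN : A ⊆ N) (hA : I A) :
    (A \ B).card ≤ k * (B \ A).card :=
  IsBase.card_sdiff_le_mul_card_sdiff hdown hext ⟨hBN, hB, hBmax⟩ hAN hA

/-- In a k-extendible system, if `B` is an inclusion-wise maximal independent
set (a base) and `A` is any independent set, then `k·|B \ A| ≥ |A \ B|`. -/
theorem stmt_3 {α : Type*} [DecidableEq α] (N : Finset α) (I : Finset α → Prop) (k : ℕ)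
    (hempty : I ∅)
    (hdown : ∀ S T : Finset α, T ⊆ N → I T → S ⊆ T → I S)
    (hext : ∀ S T : Finset α, S ⊆ T → T ⊆ N → I S → I T → ∀ u ∈ N, u ∉ T →
      I (insert u S) → ∃ Y ⊆ T \ S, Y.card ≤ k ∧ I (insert u (T \ Y)))
    (B : Finset α) (hBN : B ⊆ N) (hB : I B)
    (hBmax : ∀ u ∈ N, u ∉ B → ¬ I (insert u B))
    (A : Finset α) (hAN : A ⊆ N) (hA : I A) :
    (A \ B).card ≤ k * (B \ A).card :=
  stmt_3_general N I k hdown hext B hBN hB hBmax A hAN hA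
end

section
/- In a k-extendible system, given a base B and an independent set A with elements of B \ A enumerated as x₁,…,x_m, there exists a sequence of independent sets A₀ = A, A₁, …, A_m such that for each i, A_i = A_{i-1} \ Y_i + x_i for some Y_i ⊆ A_{i-1} \ B with |Y_i| ≤ k, and A_m = B. -/
/-!
Apply extendibility with `S = Aᵢ ∩ B`, `T = Aᵢ` and `u = xᵢ`: the set `S + u` lies in `B`, so it
is independent, and at most `k` elements of `Aᵢ \ B` have to leave to make room for `xᵢ`. Such a
step never removes an element of `B`, so `Aᵢ ∩ B = (A ∩ B) ∪ {x₀, …, xᵢ₋₁}`. Hence `B ⊆ Aₘ`, and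
maximality of the base `B` forces `Aₘ = B`.
-/

open Finset

section ExtendibleSystem

variable {α : Type*}

def IsDownClosedOn (N : Finset α) (I : Finset α → Prop) : Prop :=
  ∀ S T : Finset α, T ⊆ N → I T → S ⊆ T → I S

variable [DecidableEq α]

def IsExchangeStep (k : ℕ) (B : Finset α) (u : α) (T T' : Finset α) : Prop :=
  ∃ Y ⊆ T \ B, Y.card ≤ k ∧ T' = insert u (T \ Y)

section ExchangeStep

variable {k : ℕ} {B T T' : Finset α} {u : α}

theorem IsExchangeStep.subset_insert (h : IsExchangeStep k B u T T') : T' ⊆ insert u T := by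
  obtain ⟨Y, -, -, rfl⟩ := h
  exact insert_subset_insert u sdiff_subset

theorem IsExchangeStep.inter_eq (h : IsExchangeStep k B u T T') (hu : u ∈ B) :
    T' ∩ B = insert u (T ∩ B) := by
  obtain ⟨Y, hY, -, rfl⟩ := h
  have hYB : ∀ a ∈ Y, a ∉ B := fun a ha => (mem_sdiff.1 (hY ha)).2
  ext a
  simp only [mem_inter, mem_insert, mem_sdiff]
  grind

theorem IsKExtendible.exists_isExchangeStep {N : Finset α} {I : Finset α → Prop}
    (hext : IsKExtendible N I k) (hdown : IsDownClosedOn N I) (hBN : B ⊆ N) (hB : I B)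
    (hTN : T ⊆ N) (hT : I T) (hu : u ∈ B) (huT : u ∉ T) :
    ∃ T', I T' ∧ IsExchangeStep k B u T T' := by
  have hS : T ∩ B ⊆ T := inter_subset_left
  obtain ⟨Y, hY, hYk, hIY⟩ := hext (T ∩ B) T hS hTN (hdown _ _ hTN hT hS) hT u (hBN hu) huT
    (hdown _ _ hBN hB (insert_subset hu inter_subset_right))
  exact ⟨_, hIY, Y, by rwa [sdiff_inter_self_left] at hY, hYk, rfl⟩

end ExchangeStep

section ExchangeChain

variable {k : ℕ} {B : Finset α} {Aseq : ℕ → Finset α} {x : ℕ → α}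

theorem inter_eq_of_isExchangeStep_chain {n : ℕ}
    (hstep : ∀ j < n, IsExchangeStep k B (x j) (Aseq j) (Aseq (j + 1)))
    (hxB : ∀ j < n, x j ∈ B) :
    Aseq n ∩ B = Aseq 0 ∩ B ∪ (range n).image x := by
  induction n with
  | zero => simp
  | succ n ih =>
    rw [(hstep n n.lt_succ_self).inter_eq (hxB n n.lt_succ_self),
      ih (fun j hj => hstep j (by omega)) (fun j hj => hxB j (by omega)),
      range_add_one, image_insert, union_insert]

theorem subset_of_isExchangeStep_chain {N : Finset α} {n : ℕ}
    (hstep : ∀ j < n, IsExchangeStep k B (x j) (Aseq j) (Aseq (j + 1)))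
    (h0 : Aseq 0 ⊆ N) (hxN : ∀ j < n, x j ∈ N) : Aseq n ⊆ N := by
  induction n with
  | zero => exact h0
  | succ n ih =>
    exact (hstep n n.lt_succ_self).subset_insert.trans <| insert_subset (hxN n n.lt_succ_self)
      (ih (fun j hj => hstep j (by omega)) (fun j hj => hxN j (by omega)))

end ExchangeChain

theorem eq_of_subset_of_maximal {N B T : Finset α} {I : Finset α → Prop}
    (hdown : IsDownClosedOn N I) (hBmax : ∀ u ∈ N, u ∉ B → ¬ I (insert u B))
    (hTN : T ⊆ N) (hT : I T) (hBT : B ⊆ T) : T = B := by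
  refine Subset.antisymm (fun a ha => ?_) hBT
  by_contra haB
  exact hBmax a (hTN ha) haB (hdown _ _ hTN hT (insert_subset ha hBT))

theorem IsKExtendible.exists_isExchangeStep_chain {N : Finset α} {I : Finset α → Prop} {k : ℕ}
    (hext : IsKExtendible N I k) (hdown : IsDownClosedOn N I) {B A : Finset α}
    (hBN : B ⊆ N) (hB : I B) (hAN : A ⊆ N) (hA : I A) {n : ℕ} {x : ℕ → α}
    (hx : ∀ i < n, x i ∈ B \ A) (hxinj : Set.InjOn x (Set.Iio n)) :
    ∃ Aseq : ℕ → Finset α, Aseq 0 = A ∧ (∀ j ≤ n, I (Aseq j)) ∧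
      ∀ j < n, IsExchangeStep k B (x j) (Aseq j) (Aseq (j + 1)) := by
  induction n with
  | zero => exact ⟨fun _ => A, rfl, fun _ _ => hA, fun _ h => absurd h (Nat.not_lt_zero _)⟩
  | succ n ih =>
    obtain ⟨Aseq, h0, hI, hstep⟩ :=
      ih (fun i hi => hx i (by omega)) (hxinj.mono (Set.Iio_subset_Iio n.le_succ))
    have hxB : ∀ j < n + 1, x j ∈ B := fun j hj => (mem_sdiff.1 (hx j hj)).1
    have hTN : Aseq n ⊆ N := subset_of_isExchangeStep_chain hstep (h0 ▸ hAN)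
      (fun j hj => hBN (hxB j (by omega)))
    have hxT : x n ∉ Aseq n := by
      intro hmem
      have hmem' := inter_eq_of_isExchangeStep_chain hstep (fun j hj => hxB j (by omega)) ▸
        mem_inter.2 ⟨hmem, hxB n n.lt_succ_self⟩
      simp only [h0, mem_union, mem_inter, mem_image, mem_range] at hmem'
      rcases hmem' with ⟨hxA, -⟩ | ⟨j, hj, hxj⟩
      · exact (mem_sdiff.1 (hx n n.lt_succ_self)).2 hxA
      · exact hj.ne (hxinj (Set.mem_Iio.2 (by omega)) (Set.mem_Iio.2 n.lt_succ_self) hxj)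
    obtain ⟨T', hIT', hT'⟩ :=
      hext.exists_isExchangeStep hdown hBN hB hTN (hI n le_rfl) (hxB n n.lt_succ_self) hxT
    refine ⟨Function.update Aseq (n + 1) T', by simp [h0], fun j hj => ?_, fun j hj => ?_⟩
    · rcases hj.lt_or_eq with hj | rfl
      · rw [Function.update_of_ne (by omega)]
        exact hI j (by omega)
      · simpa using hIT'
    · rcases (Nat.lt_succ_iff.1 hj).lt_or_eq with hj | rfl
      · rw [Function.update_of_ne (by omega), Function.update_of_ne (by omega)]
        exact hstep j hj
      · rw [Function.update_self, Function.update_of_ne (by omega)]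
        exact hT'

end ExtendibleSystem

theorem stmt_5_general {α : Type*} [DecidableEq α] (N : Finset α) (I : Finset α → Prop) (k : ℕ)
    (hdown : ∀ S T : Finset α, T ⊆ N → I T → S ⊆ T → I S)
    (hext : ∀ S T : Finset α, S ⊆ T → T ⊆ N → I S → I T → ∀ u ∈ N, u ∉ T →
      I (insert u S) → ∃ Y ⊆ T \ S, Y.card ≤ k ∧ I (insert u (T \ Y)))
    (B : Finset α) (hBN : B ⊆ N) (hB : I B)
    (hBmax : ∀ u ∈ N, u ∉ B → ¬ I (insert u B))
    (A : Finset α) (hAN : A ⊆ N) (hA : I A)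
    (m : ℕ) (hm : m = (B \ A).card) (x : ℕ → α)
    (hx : ∀ i < m, x i ∈ B \ A) (hxinj : Set.InjOn x (Set.Iio m)) :
    ∃ Aseq : ℕ → Finset α, Aseq 0 = A ∧ Aseq m = B ∧
      (∀ i ≤ m, I (Aseq i)) ∧
      ∀ i < m, ∃ Y ⊆ Aseq i \ B, Y.card ≤ k ∧
        Aseq (i + 1) = insert (x i) (Aseq i \ Y) := by
  obtain ⟨Aseq, h0, hI, hstep⟩ :=
    IsKExtendible.exists_isExchangeStep_chain hext hdown hBN hB hAN hA hx hxinj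
  have hxB : ∀ i < m, x i ∈ B := fun i hi => (mem_sdiff.1 (hx i hi)).1
  have himage : (range m).image x = B \ A := by
    refine eq_of_subset_of_card_le (image_subset_iff.2 fun i hi => hx i (mem_range.1 hi)) ?_
    rw [card_image_of_injOn (fun i hi j hj => hxinj (by simpa using hi) (by simpa using hj)),
      card_range, hm]
  have hBsub : B ⊆ Aseq m := by
    have hinter := inter_eq_of_isExchangeStep_chain hstep hxB
    rw [h0, himage, inter_comm A B, union_comm, sdiff_union_inter] at hinter
    exact inter_eq_right.1 hinter
  have hAmN : Aseq m ⊆ N :=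
    subset_of_isExchangeStep_chain hstep (h0 ▸ hAN) fun i hi => hBN (hxB i hi)
  exact ⟨Aseq, h0, eq_of_subset_of_maximal hdown hBmax hAmN (hI m le_rfl) hBsub, hI, hstep⟩

/-- In a k-extendible system, given a base `B` and an independent set `A`
with the elements of `B \ A` enumerated as `x 0, …, x (m-1)`, there exists a sequence of
independent sets `A₀ = A, A₁, …, A_m` such that for each `i < m`,
`A_{i+1} = A_i \ Y_{i+1} + x i` for some `Y_{i+1} ⊆ A_i \ B` with `|Y_{i+1}| ≤ k`,
and `A_m = B`. -/
theorem stmt_5 {α : Type*} [DecidableEq α] (N : Finset α) (I : Finset α → Prop) (k : ℕ)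
    (hempty : I ∅)
    (hdown : ∀ S T : Finset α, T ⊆ N → I T → S ⊆ T → I S)
    (hext : ∀ S T : Finset α, S ⊆ T → T ⊆ N → I S → I T → ∀ u ∈ N, u ∉ T →
      I (insert u S) → ∃ Y ⊆ T \ S, Y.card ≤ k ∧ I (insert u (T \ Y)))
    (B : Finset α) (hBN : B ⊆ N) (hB : I B)
    (hBmax : ∀ u ∈ N, u ∉ B → ¬ I (insert u B))
    (A : Finset α) (hAN : A ⊆ N) (hA : I A)
    (m : ℕ) (hm : m = (B \ A).card) (x : ℕ → α)
    (hx : ∀ i < m, x i ∈ B \ A) (hxinj : Set.InjOn x (Set.Iio m)) :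
    ∃ Aseq : ℕ → Finset α, Aseq 0 = A ∧ Aseq m = B ∧
      (∀ i ≤ m, I (Aseq i)) ∧
      ∀ i < m, ∃ Y ⊆ Aseq i \ B, Y.card ≤ k ∧
        Aseq (i + 1) = insert (x i) (Aseq i \ Y) :=
  stmt_5_general N I k hdown hext B hBN hB hBmax A hAN hA m hm x hx hxinj
end

section
/- Every intersection of k matroids on a common ground set is a k-extendible system. -/
/-!
In a single matroid, augmenting `insert u S` from `T` inside `insert u T` yields an
independent set missing at most one element of `T`, so every matroid is `1`-extendible.
For an intersection, remove the union of the sets `Y i` found in the individual matroids: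
this union has at most `k` elements, and by downward closure `insert u (T \ Y)` stays
independent in each of them.
-/

namespace Finset

variable {α : Type*} [DecidableEq α]

def IsExtendible (N : Finset α) (I : Finset α → Prop) (k : ℕ) : Prop :=
  ∀ S T : Finset α, S ⊆ T → T ⊆ N → I S → I T →
    ∀ u ∈ N, u ∉ T → I (insert u S) → ∃ Y ⊆ T \ S, Y.card ≤ k ∧ I (insert u (T \ Y))

section Matroid

variable {N : Finset α} {I : Finset α → Prop}
  (hexch : ∀ A B : Finset α, A ⊆ N → B ⊆ N → I A → I B →
    A.card < B.card → ∃ u ∈ B \ A, I (insert u A))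
include hexch

theorem exists_indep_superset_subset_union_card_le {A B : Finset α} (hAN : A ⊆ N)
    (hBN : B ⊆ N) (hA : I A) (hB : I B) :
    ∃ A', A ⊆ A' ∧ A' ⊆ A ∪ B ∧ I A' ∧ B.card ≤ A'.card := by
  by_cases hcard : B.card ≤ A.card
  · exact ⟨A, subset_rfl, subset_union_left, hA, hcard⟩
  obtain ⟨v, hv, hvA⟩ := hexch A B hAN hBN hA hB (by omega)
  have hvB : v ∈ B := (mem_sdiff.mp hv).1
  obtain ⟨A', hAA', hA'B, hA', hcard'⟩ :=
    exists_indep_superset_subset_union_card_le (insert_subset (hBN hvB) hAN) hBN hvA hB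
  refine ⟨A', (subset_insert v A).trans hAA', ?_, hA', hcard'⟩
  rw [insert_union, insert_eq_of_mem (mem_union_right A hvB)] at hA'B
  exact hA'B
termination_by B.card - A.card
decreasing_by rw [card_insert_of_notMem (mem_sdiff.mp hv).2]; omega

theorem isExtendible_one_of_exchange
    (hdown : ∀ S T : Finset α, T ⊆ N → I T → S ⊆ T → I S) : IsExtendible N I 1 := by
  intro S T hST hTN _ hT u huN _ hSu
  have huTN : insert u T ⊆ N := insert_subset huN hTN
  obtain ⟨A, hSA, hAT, hA, hcard⟩ := exists_indep_superset_subset_union_card_le hexch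
    (insert_subset huN (hST.trans hTN)) hTN hSu hT
  rw [insert_union, union_eq_right.mpr hST] at hAT
  have huA : u ∈ A := hSA (mem_insert_self u S)
  refine ⟨T \ A, sdiff_subset_sdiff subset_rfl ((subset_insert u S).trans hSA), ?_, ?_⟩
  · -- `A` minus `u` lies in `T ∩ A` and has at least `T.card - 1` elements.
    have hErase : A.erase u ⊆ T ∩ A := fun x hx => by
      obtain ⟨hxu, hxA⟩ := mem_erase.mp hx
      exact mem_inter.mpr ⟨(mem_insert.mp (hAT hxA)).resolve_left hxu, hxA⟩
    have hle := card_le_card hErase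
    rw [card_erase_of_mem huA] at hle
    have := card_sdiff_add_card_inter T A
    omega
  · refine hdown _ A (hAT.trans huTN) hA (insert_subset huA fun x hx => ?_)
    rw [sdiff_sdiff_right_self, inf_eq_inter] at hx
    exact (mem_inter.mp hx).2

end Matroid

theorem isExtendible_forall {ι : Type*} [Fintype ι] {N : Finset α}
    {Is : ι → Finset α → Prop} {k : ι → ℕ} (hext : ∀ i, IsExtendible N (Is i) (k i))
    (hdown : ∀ i, ∀ S T : Finset α, T ⊆ N → Is i T → S ⊆ T → Is i S) :
    IsExtendible N (fun X => ∀ i, Is i X) (∑ i, k i) := by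
  intro S T hST hTN hS hT u huN huT hSu
  choose Y hYST hYcard hY using fun i => hext i S T hST hTN (hS i) (hT i) u huN huT (hSu i)
  refine ⟨univ.biUnion Y, biUnion_subset.mpr fun i _ => hYST i, ?_, fun i => ?_⟩
  · exact card_biUnion_le.trans (sum_le_sum fun i _ => hYcard i)
  · refine hdown i _ _ (insert_subset huN (sdiff_subset.trans hTN)) (hY i) ?_
    exact insert_subset_insert u
      (sdiff_subset_sdiff subset_rfl (subset_biUnion_of_mem Y (mem_univ i)))

end Finset

theorem stmt_6_general {α : Type*} [DecidableEq α] (N : Finset α) (k : ℕ)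
    (Is : Fin k → Finset α → Prop)
    (hdown : ∀ i, ∀ S T : Finset α, T ⊆ N → Is i T → S ⊆ T → Is i S)
    (hexch : ∀ i, ∀ A B : Finset α, A ⊆ N → B ⊆ N → Is i A → Is i B →
      A.card < B.card → ∃ u ∈ B \ A, Is i (insert u A)) :
    ∀ S T : Finset α, S ⊆ T → T ⊆ N → (∀ i, Is i S) → (∀ i, Is i T) →
      ∀ u ∈ N, u ∉ T → (∀ i, Is i (insert u S)) →
        ∃ Y ⊆ T \ S, Y.card ≤ k ∧ ∀ i, Is i (insert u (T \ Y)) := by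
  have h := Finset.isExtendible_forall
    (fun i => Finset.isExtendible_one_of_exchange (hexch i) (hdown i)) hdown
  rwa [Finset.sum_const, Finset.card_univ, Fintype.card_fin, smul_eq_mul, mul_one] at h

/-- Every intersection of `k` matroids on a common ground set is a
`k`-extendible system. -/
theorem stmt_6 {α : Type*} [DecidableEq α] (N : Finset α) (k : ℕ) (hk : 1 ≤ k)
    (Is : Fin k → Finset α → Prop)
    (hempty : ∀ i, Is i ∅)
    (hdown : ∀ i, ∀ S T : Finset α, T ⊆ N → Is i T → S ⊆ T → Is i S)
    (hexch : ∀ i, ∀ A B : Finset α, A ⊆ N → B ⊆ N → Is i A → Is i B →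
      A.card < B.card → ∃ u ∈ B \ A, Is i (insert u A)) :
    ∀ S T : Finset α, S ⊆ T → T ⊆ N → (∀ i, Is i S) → (∀ i, Is i T) →
      ∀ u ∈ N, u ∉ T → (∀ i, Is i (insert u S)) →
        ∃ Y ⊆ T \ S, Y.card ≤ k ∧ ∀ i, Is i (insert u (T \ Y)) :=
  stmt_6_general N k Is hdown hexch
end

section
/- Every matroid is a 1-extendible system, and every 1-extendible system in which the empty set is independent is a matroid. -/
/-!
Matroid ⇒ 1-extendible: augment `S + u` from `T` by the exchange axiom until it has at least
`|T|` elements; the result is `T \ Y + u` with `Y ⊆ T \ S` and `|Y| ≤ 1`.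

1-extendible ⇒ matroid: given `|A| < |B|`, pick `u ∈ A \ B` and apply 1-extendibility to
`A ∩ B ⊆ B` and `u`. The independent set `B \ Y + u` is no smaller than `B` and shares one more
element with `A`, so induction on `|A \ B|` ends at `A ⊆ B`, where down-closure finishes.
-/

section

open Finset

variable {α : Type*} [DecidableEq α]

def SatisfiesExchange (I : Finset α → Prop) : Prop :=
  ∀ A B : Finset α, I A → I B → #A < #B → ∃ u ∈ B \ A, I (insert u A)

def IsOneExtendible (I : Finset α → Prop) : Prop :=
  ∀ S T : Finset α, S ⊆ T → I S → I T → ∀ u, u ∉ T → I (insert u S) →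
    ∃ Y ⊆ T \ S, #Y ≤ 1 ∧ I (insert u (T \ Y))

variable {I : Finset α → Prop}

theorem SatisfiesExchange.exists_augment (hex : SatisfiesExchange I) {A B : Finset α}
    (hA : I A) (hB : I B) : ∃ C, A ⊆ C ∧ C ⊆ A ∪ B ∧ #B ≤ #C ∧ I C := by
  by_cases hAB : #B ≤ #A
  · exact ⟨A, subset_rfl, subset_union_left, hAB, hA⟩
  obtain ⟨v, hv, hvA⟩ := hex A B hA hB (not_le.mp hAB)
  obtain ⟨hvB, hvA'⟩ := mem_sdiff.mp hv
  obtain ⟨C, hAC, hCB, hcard, hC⟩ := hex.exists_augment hvA hB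
  refine ⟨C, (subset_insert v A).trans hAC, ?_, hcard, hC⟩
  rwa [insert_union, insert_eq_of_mem (mem_union_right A hvB)] at hCB
termination_by #B - #A
decreasing_by rw [card_insert_of_notMem hvA']; omega

theorem SatisfiesExchange.isOneExtendible (hex : SatisfiesExchange I) : IsOneExtendible I := by
  intro S T hST _ hT u huT huS
  obtain ⟨C, huSC, hCT, hcard, hC⟩ := hex.exists_augment huS hT
  have hSC : S ⊆ C := (subset_insert u S).trans huSC
  have hC_eq : insert u (T ∩ C) = C := by
    have hCT' : C ⊆ insert u T := by rwa [insert_union, union_eq_right.mpr hST] at hCT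
    grind
  refine ⟨T \ C, sdiff_subset_sdiff subset_rfl hSC, ?_, ?_⟩
  · have hsplit := card_sdiff_add_card_inter T C
    have hCcard : #C = #(T ∩ C) + 1 := by
      rw [← hC_eq, card_insert_of_notMem fun h ↦ huT (mem_inter.mp h).1, hC_eq]
    omega
  · rwa [sdiff_sdiff_self_left, hC_eq]

theorem exists_insert_of_subset_of_card_lt (hdown : ∀ S T : Finset α, I T → S ⊆ T → I S)
    {A B : Finset α} (hB : I B) (hAB : A ⊆ B) (hcard : #A < #B) :
    ∃ u ∈ B \ A, I (insert u A) := by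
  obtain ⟨u, hu⟩ : (B \ A).Nonempty := by
    rw [← card_pos, card_sdiff_of_subset hAB]
    omega
  exact ⟨u, hu, hdown _ _ hB (insert_subset (mem_sdiff.mp hu).1 hAB)⟩

theorem IsOneExtendible.exists_insert_of_card_lt (hext : IsOneExtendible I)
    (hdown : ∀ S T : Finset α, I T → S ⊆ T → I S) {A B : Finset α} (hA : I A) (hB : I B)
    (hAB : #A < #B) : ∃ u ∈ B \ A, I (insert u A) := by
  by_cases hsub : A ⊆ B
  · exact exists_insert_of_subset_of_card_lt hdown hB hsub hAB
  obtain ⟨u, huA, huB⟩ := not_subset.mp hsub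
  obtain ⟨Y, hY, hYcard, hB'⟩ := hext (A ∩ B) B inter_subset_right
    (hdown _ _ hA inter_subset_left) hB u huB
    (hdown _ _ hA (insert_subset huA inter_subset_left))
  have hcard : #A < #(insert u (B \ Y)) := by
    have := card_le_card_sdiff_add_card (s := B) (t := Y)
    rw [card_insert_of_notMem fun h ↦ huB (mem_sdiff.mp h).1]
    omega
  have hcloser : A \ insert u (B \ Y) ⊂ A \ B := by
    rw [ssubset_iff_of_subset (by grind)]
    exact ⟨u, mem_sdiff.mpr ⟨huA, huB⟩, fun h ↦ (mem_sdiff.mp h).2 (mem_insert_self u _)⟩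
  obtain ⟨v, hv, hvA⟩ := hext.exists_insert_of_card_lt hdown hA hB' hcard
  refine ⟨v, mem_sdiff.mpr ⟨?_, (mem_sdiff.mp hv).2⟩, hvA⟩
  grind
termination_by #(A \ B)
decreasing_by exact card_lt_card hcloser

end

theorem stmt_7_general {α : Type*} [DecidableEq α] (I : Finset α → Prop)
    (hdown : ∀ S T : Finset α, I T → S ⊆ T → I S) :
    ((∀ A B : Finset α, I A → I B → A.card < B.card → ∃ u ∈ B \ A, I (insert u A)) →
      (∀ S T : Finset α, S ⊆ T → I S → I T → ∀ u, u ∉ T → I (insert u S) →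
        ∃ Y ⊆ T \ S, Y.card ≤ 1 ∧ I (insert u (T \ Y)))) ∧
    ((∀ S T : Finset α, S ⊆ T → I S → I T → ∀ u, u ∉ T → I (insert u S) →
        ∃ Y ⊆ T \ S, Y.card ≤ 1 ∧ I (insert u (T \ Y))) →
      (∀ A B : Finset α, I A → I B → A.card < B.card → ∃ u ∈ B \ A, I (insert u A))) :=
  ⟨SatisfiesExchange.isOneExtendible,
    fun hext _ _ hA hB hAB ↦ IsOneExtendible.exists_insert_of_card_lt hext hdown hA hB hAB⟩

/-- Every matroid is a 1-extendible system, and every 1-extendible system in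
which the empty set is independent is a matroid (i.e., satisfies the exchange axiom). -/
theorem stmt_7 {α : Type*} [DecidableEq α] (I : Finset α → Prop)
    (hempty : I ∅) (hdown : ∀ S T : Finset α, I T → S ⊆ T → I S) :
    ((∀ A B : Finset α, I A → I B → A.card < B.card → ∃ u ∈ B \ A, I (insert u A)) →
      (∀ S T : Finset α, S ⊆ T → I S → I T → ∀ u, u ∉ T → I (insert u S) →
        ∃ Y ⊆ T \ S, Y.card ≤ 1 ∧ I (insert u (T \ Y)))) ∧
    ((∀ S T : Finset α, S ⊆ T → I S → I T → ∀ u, u ∉ T → I (insert u S) →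
        ∃ Y ⊆ T \ S, Y.card ≤ 1 ∧ I (insert u (T \ Y))) →
      (∀ A B : Finset α, I A → I B → A.card < B.card → ∃ u ∈ B \ A, I (insert u A))) :=
  stmt_7_general I hdown
end

section
/- A single knapsack constraint in which the ratio between the largest and smallest item sizes is at most k is a k-set system: for any budget W and sizes s: N → ℝ_{>0} with max s / min s ≤ k, the family I = {S ⊆ N : Σ_{u∈S} s(u) ≤ W} is an independence system in which, for every subset E ⊆ N, the sizes of any two maximal feasible subsets of E differ by a factor of at most k. -/
/-!
Let `m` be the smallest size, so every item weighs between `m` and `k m`. If the feasible set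
`B₁` is not contained in the maximal set `B₂`, some `u ∈ B₁ \ B₂` cannot be added to `B₂`, so
`s(B₁ \ {u}) ≤ W - s u < s(B₂)`. Comparing `(|B₁| - 1) m ≤ s(B₁ \ {u})` with `s(B₂) ≤ |B₂| k m`
gives `|B₁| - 1 < k |B₂|`.
-/

open Finset

namespace Knapsack

variable {α : Type*} [DecidableEq α] (s : α → ℝ)

theorem sum_erase_lt_sum_of_not_insert {B₁ B₂ : Finset α} {W : ℝ} {u : α}
    (hB₁ : ∑ v ∈ B₁, s v ≤ W) (huB₁ : u ∈ B₁) (huB₂ : u ∉ B₂)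
    (hblock : ¬ ∑ v ∈ insert u B₂, s v ≤ W) :
    ∑ v ∈ B₁.erase u, s v < ∑ v ∈ B₂, s v := by
  rw [sum_insert huB₂] at hblock
  have hsplit := add_sum_erase B₁ s huB₁
  linarith

theorem card_le_mul_card_of_sum_erase_lt {A B : Finset α} {u : α} {m : ℝ} (k : ℕ)
    (hm : 0 < m) (hA : ∀ v ∈ A, m ≤ s v) (hB : ∀ v ∈ B, s v ≤ k * m) (hu : u ∈ A)
    (hlt : ∑ v ∈ A.erase u, s v < ∑ v ∈ B, s v) :
    A.card ≤ k * B.card := by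
  have hlower : (A.erase u).card * m ≤ ∑ v ∈ A.erase u, s v := by
    simpa only [nsmul_eq_mul] using
      card_nsmul_le_sum _ _ _ fun v hv => hA v (mem_of_mem_erase hv)
  have hupper : ∑ v ∈ B, s v ≤ B.card * (k * m) := by
    simpa only [nsmul_eq_mul] using sum_le_card_nsmul _ _ _ hB
  have hcard : ((A.erase u).card : ℝ) < (k * B.card : ℕ) := by
    push_cast
    nlinarith
  have hcard' : (A.erase u).card < k * B.card := by exact_mod_cast hcard
  have := card_erase_add_one hu
  omega

end Knapsack

theorem stmt_8_general {α : Type*} [DecidableEq α] (N : Finset α) (s : α → ℝ)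
    (hs : ∀ u ∈ N, 0 < s u) (k : ℕ) (hk : 1 ≤ k)
    (hratio : ∀ u ∈ N, ∀ v ∈ N, s u ≤ (k : ℝ) * s v)
    (W : ℝ) :
    (∀ S T : Finset α, S ⊆ T → T ⊆ N → ∑ u ∈ T, s u ≤ W → ∑ u ∈ S, s u ≤ W) ∧
    (∀ E ⊆ N, ∀ B₁ B₂ : Finset α, B₁ ⊆ E → B₂ ⊆ E →
      ∑ u ∈ B₁, s u ≤ W → ∑ u ∈ B₂, s u ≤ W →
      (∀ u ∈ E, u ∉ B₁ → ¬ (∑ v ∈ insert u B₁, s v ≤ W)) →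
      (∀ u ∈ E, u ∉ B₂ → ¬ (∑ v ∈ insert u B₂, s v ≤ W)) →
      B₁.card ≤ k * B₂.card) := by
  refine ⟨fun S T hST hTN hT => le_trans ?_ hT, ?_⟩
  · exact sum_le_sum_of_subset_of_nonneg hST fun v hv _ => (hs v (hTN hv)).le
  intro E hE B₁ B₂ hB₁E hB₂E hB₁ _ _ hmax₂
  by_cases hsub : B₁ ⊆ B₂
  · exact (card_le_card hsub).trans (Nat.le_mul_of_pos_left _ hk)
  obtain ⟨u, huB₁, huB₂⟩ := not_subset.1 hsub
  obtain ⟨w, hwN, hwmin⟩ := N.exists_min_image s ⟨u, hE (hB₁E huB₁)⟩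
  exact Knapsack.card_le_mul_card_of_sum_erase_lt s k (hs w hwN)
    (fun v hv => hwmin v (hE (hB₁E hv))) (fun v hv => hratio v (hE (hB₂E hv)) w hwN) huB₁
    (Knapsack.sum_erase_lt_sum_of_not_insert s hB₁ huB₁ huB₂ (hmax₂ u (hB₁E huB₁) huB₂))

/-- A single knapsack constraint in which the ratio between the largest and
smallest item sizes is at most `k` is a `k`-set system: the family of subsets of total
size at most `W` is down-closed, and for every `E ⊆ N` the sizes of any two maximal
feasible subsets of `E` differ by a factor of at most `k`. -/
theorem stmt_8 {α : Type*} [DecidableEq α] (N : Finset α) (s : α → ℝ)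
    (hs : ∀ u ∈ N, 0 < s u) (k : ℕ) (hk : 1 ≤ k)
    (hratio : ∀ u ∈ N, ∀ v ∈ N, s u ≤ (k : ℝ) * s v)
    (W : ℝ) (hW : ∀ u ∈ N, s u ≤ W) :
    (∀ S T : Finset α, S ⊆ T → T ⊆ N → ∑ u ∈ T, s u ≤ W → ∑ u ∈ S, s u ≤ W) ∧
    (∀ E ⊆ N, ∀ B₁ B₂ : Finset α, B₁ ⊆ E → B₂ ⊆ E →
      ∑ u ∈ B₁, s u ≤ W → ∑ u ∈ B₂, s u ≤ W →
      (∀ u ∈ E, u ∉ B₁ → ¬ (∑ v ∈ insert u B₁, s v ≤ W)) →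
      (∀ u ∈ E, u ∉ B₂ → ¬ (∑ v ∈ insert u B₂, s v ≤ W)) →
      B₁.card ≤ k * B₂.card) :=
  stmt_8_general N s hs k hk hratio W
end

section
/- Let T_{i+1} ⊆ T_i be finite sets where T_i is a base (maximal independent set) of the restriction of a k-extendible system to ∪_{j≥i} C_j, C_i is independent, T_i \ T_{i+1} ⊆ C_i ∩ T_i, and |C_i| ≥ |O_i|/k for an independent set O_i of elements fed to the i-th greedy. Then k²·|T_{i+1}| + k·|T_i \ T_{i+1}| ≥ |O_i|. -/
/-! Every element of `Tᵢ \ Tᵢ₊₁` lies in `Cᵢ`, so `Cᵢ ∩ Tᵢ` is covered by `Tᵢ \ Tᵢ₊₁` and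
`Tᵢ₊₁ ∩ Cᵢ`, while `Tᵢ \ Cᵢ ⊆ Tᵢ₊₁ \ Cᵢ`. Splitting `|Cᵢ| = |Cᵢ ∩ Tᵢ| + |Cᵢ \ Tᵢ|` and bounding
`|Cᵢ \ Tᵢ|` by `k·|Tᵢ \ Cᵢ|` gives `k·|Cᵢ| ≤ k·|Tᵢ \ Tᵢ₊₁| + k²·|Tᵢ₊₁|`, and `|Oᵢ| ≤ k·|Cᵢ|`. -/

namespace Finset

variable {α : Type*} [DecidableEq α] {C T T' : Finset α}

lemma card_inter_le_card_sdiff_add_card_inter (C T T' : Finset α) :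
    #(C ∩ T) ≤ #(T \ T') + #(T' ∩ C) := by
  refine (card_le_card fun x hx => ?_).trans (card_union_le _ _)
  grind

lemma card_sdiff_le_card_sdiff_of_sdiff_subset (h : T \ T' ⊆ C) : #(T \ C) ≤ #(T' \ C) :=
  card_le_card <| subset_sdiff.2 ⟨sdiff_le_comm.1 h, disjoint_sdiff_self_left⟩

lemma mul_card_le_of_sdiff_subset {k : ℕ} (hCT : #(C \ T) ≤ k * #(T \ C))
    (hTT' : T \ T' ⊆ C) : k * #C ≤ k * #(T \ T') + k ^ 2 * #T' := by
  have hC : #(C \ T) ≤ k * #(T' \ C) :=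
    hCT.trans (Nat.mul_le_mul_left k (card_sdiff_le_card_sdiff_of_sdiff_subset hTT'))
  have hk : k ≤ k ^ 2 := Nat.le_self_pow two_ne_zero k
  calc k * #C = k * #(C ∩ T) + k * #(C \ T) := by rw [← card_inter_add_card_sdiff C T]; ring
    _ ≤ k * (#(T \ T') + #(T' ∩ C)) + k * (k * #(T' \ C)) := by
      gcongr
      exact card_inter_le_card_sdiff_add_card_inter C T T'
    _ ≤ k * #(T \ T') + k ^ 2 * (#(T' ∩ C) + #(T' \ C)) := by
      rw [mul_add, mul_add, ← mul_assoc, ← sq, add_assoc]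
      gcongr
    _ = k * #(T \ T') + k ^ 2 * #T' := by rw [card_inter_add_card_sdiff]

end Finset

theorem stmt_10_general {α : Type*} [DecidableEq α] (k : ℕ)
    (Ti Tip1 Ci Oi : Finset α)
    (hgreedy : (Ci \ Ti).card ≤ k * (Ti \ Ci).card)
    (happrox : Oi.card ≤ k * Ci.card)
    (hdiff : Ti \ Tip1 ⊆ Ci ∩ Ti) :
    Oi.card ≤ k ^ 2 * Tip1.card + k * (Ti \ Tip1).card := by
  calc Oi.card ≤ k * Ci.card := happrox
    _ ≤ k * (Ti \ Tip1).card + k ^ 2 * Tip1.card :=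
      Finset.mul_card_le_of_sdiff_subset hgreedy (hdiff.trans Finset.inter_subset_left)
    _ = k ^ 2 * Tip1.card + k * (Ti \ Tip1).card := add_comm _ _

/-- arithmetic core of Lemma 6: if `k·|Tᵢ \ Cᵢ| ≥ |Cᵢ \ Tᵢ|`,
`|Cᵢ| ≥ |Oᵢ|/k`, `Tᵢ₊₁ ⊆ Tᵢ`, and `Tᵢ \ Tᵢ₊₁ ⊆ Cᵢ ∩ Tᵢ`, then
`k²·|Tᵢ₊₁| + k·|Tᵢ \ Tᵢ₊₁| ≥ |Oᵢ|`. -/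
theorem stmt_10 {α : Type*} [DecidableEq α] (k : ℕ) (hk : 1 ≤ k)
    (Ti Tip1 Ci Oi : Finset α)
    (hgreedy : (Ci \ Ti).card ≤ k * (Ti \ Ci).card)
    (happrox : Oi.card ≤ k * Ci.card)
    (hsub : Tip1 ⊆ Ti)
    (hdiff : Ti \ Tip1 ⊆ Ci ∩ Ti) :
    Oi.card ≤ k ^ 2 * Tip1.card + k * (Ti \ Tip1).card :=
  stmt_10_general k Ti Tip1 Ci Oi hgreedy happrox hdiff
end

section
/- Suppose f: O → T is a function between finite sets with weight functions w such that (1) |f⁻¹(t)| ≤ k² for every t ∈ T, (2) |{u ∈ f⁻¹(t) : w(u) = w(t)}| ≤ k for every t ∈ T, (3) w(u) ≤ w(f(u)) for every u ∈ O, and (4) all weights are powers of k with k ≥ 2. Then w(O) ≤ 2k·w(T). -/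
/-!
Sum the weights fiber by fiber. In the fiber over `t`, at most `k` elements have weight `w t`;
every other element has a strictly smaller power of `k` as weight, hence weight at most `w t / k`,
and there are at most `k²` of them. So the fiber weighs at most `k · w t + k² · w t / k = 2k · w t`.
-/

open Finset

theorem zpow_eq_or_le_div_of_le {α : Type*} [Field α] [LinearOrder α] [IsStrictOrderedRing α]
    {a : α} (ha : 1 < a) {i j : ℤ} (h : a ^ i ≤ a ^ j) : a ^ i = a ^ j ∨ a ^ i ≤ a ^ j / a := by
  rcases h.eq_or_lt with h | h
  · exact .inl h
  · have hij : i ≤ j - 1 := Int.le_sub_one_of_lt ((zpow_lt_zpow_iff_right₀ ha).mp h)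
    right
    calc a ^ i ≤ a ^ (j - 1) := zpow_le_zpow_right₀ ha.le hij
      _ = a ^ j / a := by rw [zpow_sub₀ (by positivity), zpow_one]

theorem sum_le_of_forall_eq_or_le {ι : Type*} {s : Finset ι} {w : ι → ℝ} {W V : ℝ}
    (hW : 0 ≤ W) (hV : 0 ≤ V) (h : ∀ u ∈ s, w u = W ∨ w u ≤ V) {m n : ℕ}
    (hm : #{u ∈ s | w u = W} ≤ m) (hn : #s ≤ n) :
    ∑ u ∈ s, w u ≤ m * W + n * V := by
  classical
  rw [← sum_filter_add_sum_filter_not s (fun u => w u = W)]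
  gcongr
  · calc ∑ u ∈ s with w u = W, w u = #{u ∈ s | w u = W} * W := by
          rw [sum_congr rfl fun u hu => (mem_filter.mp hu).2, sum_const, nsmul_eq_mul]
      _ ≤ m * W := by gcongr
  · calc ∑ u ∈ s with ¬w u = W, w u ≤ ∑ _u ∈ {u ∈ s | ¬w u = W}, V := by
          refine sum_le_sum fun u hu => ?_
          rw [mem_filter] at hu
          exact (h u hu.1).resolve_left hu.2
      _ = #{u ∈ s | ¬w u = W} * V := by rw [sum_const, nsmul_eq_mul]
      _ ≤ n * V := by
          gcongr
          exact_mod_cast (card_filter_le _ _).trans hn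

open Classical in
/-- If `f : O → T` maps each element to an element of at least its weight,
each `t ∈ T` has at most `k²` preimages and at most `k` preimages of weight equal to
`w t`, and all weights are powers of `k ≥ 2`, then `w(O) ≤ 2k·w(T)`. -/
theorem stmt_12 {γ : Type*} [DecidableEq γ] (O T : Finset γ) (f : γ → γ) (w : γ → ℝ)
    (k : ℕ) (hk : 2 ≤ k)
    (hpow : ∀ u ∈ O ∪ T, ∃ j : ℤ, w u = (k : ℝ) ^ j)
    (hf : ∀ u ∈ O, f u ∈ T)
    (h1 : ∀ t ∈ T, (O.filter (fun u => f u = t)).card ≤ k ^ 2)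
    (h2 : ∀ t ∈ T, (O.filter (fun u => f u = t ∧ w u = w t)).card ≤ k)
    (h3 : ∀ u ∈ O, w u ≤ w (f u)) :
    ∑ u ∈ O, w u ≤ 2 * k * ∑ t ∈ T, w t := by
  have hk1 : (1 : ℝ) < k := by exact_mod_cast hk
  rw [← sum_fiberwise_of_maps_to hf w, mul_sum]
  refine sum_le_sum fun t ht => ?_
  obtain ⟨j, hj⟩ := hpow t (mem_union_right _ ht)
  have hwt : 0 ≤ w t := hj ▸ by positivity
  have gap : ∀ u ∈ O.filter (fun u => f u = t), w u = w t ∨ w u ≤ w t / k := by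
    intro u hu'
    obtain ⟨hu, rfl⟩ := mem_filter.mp hu'
    obtain ⟨i, hi⟩ := hpow u (mem_union_left _ hu)
    have := h3 u hu
    rw [hi, hj] at this ⊢
    exact zpow_eq_or_le_div_of_le hk1 this
  calc ∑ u ∈ O with f u = t, w u ≤ k * w t + (k ^ 2 : ℕ) * (w t / k) := by
        refine sum_le_of_forall_eq_or_le hwt (by positivity) gap ?_ (h1 t ht)
        rw [filter_filter]
        exact h2 t ht
    _ = 2 * k * w t := by push_cast; field_simp; ring
end
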